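/- arXiv:1304.0375 — 4 statements merged into one kernel-verified Lean document; each statement's English description precedes it below -/
import Mathlib

section
/- Let X and Y be topological spaces and A a closed subset of X. If F₁, F₂ : X → Set Y are lower semicontinuous correspondences (i.e., for each open V ⊆ Y, the set {x : F(x) ∩ V ≠ ∅} is open) and F₂(x) ⊆ F₁(x) for all x ∈ A, then the correspondence F defined by F(x) = F₂(x) if x ∈ A and F(x) = F₁(x) otherwise is lower semicontinuous. -/
/-- A correspondence `F : X → Set Y` is lower semicontinuous if for each `x` and open `V`
meeting `F x`, `F y` meets `V` for all `y` in a neighborhood of `x`. -/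
def LowerSemicontinuousCorr {X Y : Type*} [TopologicalSpace X] [TopologicalSpace Y]
    (F : X → Set Y) : Prop :=
  ∀ x : X, ∀ V : Set Y, IsOpen V → (F x ∩ V).Nonempty →
    ∃ U : Set X, IsOpen U ∧ x ∈ U ∧ ∀ y ∈ U, (F y ∩ V).Nonempty

theorem stmt_0 {X Y : Type*} [TopologicalSpace X] [TopologicalSpace Y]
    (A : Set X) (hA : IsClosed A)
    (F₁ F₂ F : X → Set Y)
    (h₁ : LowerSemicontinuousCorr F₁) (h₂ : LowerSemicontinuousCorr F₂)
    (hsub : ∀ x ∈ A, F₂ x ⊆ F₁ x)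
    (hFin : ∀ x ∈ A, F x = F₂ x) (hFout : ∀ x ∉ A, F x = F₁ x) :
    LowerSemicontinuousCorr F := by
  intro x V hV hne
  by_cases hx : x ∈ A
  · rw [hFin x hx] at hne
    obtain ⟨U₂, hU₂o, hxU₂, hU₂⟩ := h₂ x V hV hne
    have hne₁ : (F₁ x ∩ V).Nonempty := by
      obtain ⟨y, hy₁, hy₂⟩ := hne
      exact ⟨y, hsub x hx hy₁, hy₂⟩
    obtain ⟨U₁, hU₁o, hxU₁, hU₁⟩ := h₁ x V hV hne₁
    refine ⟨U₁ ∩ U₂, hU₁o.inter hU₂o, ⟨hxU₁, hxU₂⟩, ?_⟩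
    intro y ⟨hy₁, hy₂⟩
    by_cases hyA : y ∈ A
    · rw [hFin y hyA]; exact hU₂ y hy₂
    · rw [hFout y hyA]; exact hU₁ y hy₁
  · rw [hFout x hx] at hne
    obtain ⟨U₁, hU₁o, hxU₁, hU₁⟩ := h₁ x V hV hne
    refine ⟨U₁ ∩ Aᶜ, hU₁o.inter hA.isOpen_compl, ⟨hxU₁, hx⟩, ?_⟩
    intro y ⟨hy₁, hy₂⟩
    rw [hFout y hy₂]; exact hU₁ y hy₁
end

section
/- Let (T, 𝒯) be a measurable space and Y a metrizable topological space. If a correspondence F : T → Set Y has compact values and is weakly measurable (the lower inverse of every open set is measurable), then F is measurable (the lower inverse of every closed set is measurable). -/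
private lemma aux_compact_inter {Y : Type*} [MetricSpace Y] (K C : Set Y) (hK : IsCompact K)
    (hC : IsClosed C)
    (h : ∀ n : ℕ, (K ∩ Metric.thickening (1 / (n + 1)) C).Nonempty) :
    (K ∩ C).Nonempty := by
  have hmem : ∀ n : ℕ, (0:ℝ) < 1 / (n + 1) := fun n => by positivity
  have hinter : (⋂ n : ℕ, Metric.cthickening (1 / (n + 1)) C) = C := by
    apply Set.Subset.antisymm
    · intro y hy
      rw [Set.mem_iInter] at hy
      have : y ∈ closure C := by
        rw [Metric.mem_closure_iff]
        intro ε hε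
        obtain ⟨n, hn⟩ := exists_nat_one_div_lt hε
        have hsub := Metric.cthickening_subset_thickening' hε hn C (hy n)
        rwa [Metric.mem_thickening_iff] at hsub
      rwa [hC.closure_eq] at this
    · exact Set.subset_iInter fun n => Metric.self_subset_cthickening C
  have hK' : ∀ n : ℕ, (K ∩ Metric.cthickening (1 / (n + 1)) C).Nonempty := fun n =>
    (h n).mono (Set.inter_subset_inter_right _ (Metric.thickening_subset_cthickening _ _))
  have hmono : ∀ n : ℕ, K ∩ Metric.cthickening (1 / (((n + 1 : ℕ) : ℝ) + 1)) C ⊆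
      K ∩ Metric.cthickening (1 / (n + 1)) C := fun n =>
    Set.inter_subset_inter_right _ (Metric.cthickening_mono (by
      apply one_div_le_one_div_of_le <;> push_cast <;> linarith) C)
  have hcl : ∀ n : ℕ, IsClosed (K ∩ Metric.cthickening (1 / (n + 1)) C) := fun n =>
    (hK.isClosed).inter Metric.isClosed_cthickening
  have hc0 : IsCompact (K ∩ Metric.cthickening (1 / (((0:ℕ) : ℝ) + 1)) C) :=
    hK.inter_right Metric.isClosed_cthickening
  have hne := IsCompact.nonempty_iInter_of_sequence_nonempty_isCompact_isClosed
    (fun n => K ∩ Metric.cthickening (1 / (n + 1)) C) hmono hK' hc0 hcl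
  rwa [← Set.inter_iInter, hinter] at hne

theorem stmt_4 {T Y : Type*} [MeasurableSpace T] [TopologicalSpace Y]
    [TopologicalSpace.MetrizableSpace Y] (F : T → Set Y)
    (hcompact : ∀ t, IsCompact (F t))
    (hweak : ∀ U : Set Y, IsOpen U → MeasurableSet {t : T | (F t ∩ U).Nonempty}) :
    ∀ C : Set Y, IsClosed C → MeasurableSet {t : T | (F t ∩ C).Nonempty} := by
  letI : MetricSpace Y := TopologicalSpace.metrizableSpaceMetric Y
  intro C hC
  have key : {t : T | (F t ∩ C).Nonempty} =
      ⋂ n : ℕ, {t : T | (F t ∩ Metric.thickening (1 / (n + 1)) C).Nonempty} := by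
    ext t
    simp only [Set.mem_iInter, Set.mem_setOf_eq]
    constructor
    · rintro ⟨y, hyF, hyC⟩ n
      exact ⟨y, hyF, Metric.self_subset_thickening (by positivity) C hyC⟩
    · intro h
      exact aux_compact_inter (F t) C (hcompact t) hC h
  rw [key]
  exact MeasurableSet.iInter fun n => hweak _ Metric.isOpen_thickening
end

section
/- Every weakly measurable correspondence with nonempty closed values from a measurable space into a Polish space admits a measurable selector, i.e., a measurable function f : T → Y with f(t) ∈ F(t) for all t ∈ T. -/
open Metric Filter Topology

/-- Kuratowski–Ryll-Nardzewski: a weakly measurable correspondence with nonempty closed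
values into a Polish space admits a measurable selector. -/
theorem stmt_5 {T Y : Type*} [MeasurableSpace T] [TopologicalSpace Y] [PolishSpace Y]
    [MeasurableSpace Y] [BorelSpace Y] (F : T → Set Y)
    (hne : ∀ t, (F t).Nonempty) (hcl : ∀ t, IsClosed (F t))
    (hweak : ∀ U : Set Y, IsOpen U → MeasurableSet {t : T | (F t ∩ U).Nonempty}) :
    ∃ f : T → Y, Measurable f ∧ ∀ t, f t ∈ F t := by
  classical
  rcases isEmpty_or_nonempty T with hT | hT
  · exact ⟨fun t => (hne t).some, measurable_of_empty _, fun t => (hne t).some_mem⟩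
  letI := TopologicalSpace.upgradeIsCompletelyMetrizable Y
  haveI hY : Nonempty Y := ⟨(hne hT.some).some⟩
  set e : ℕ → Y := TopologicalSpace.denseSeq Y with he
  have hde : DenseRange e := TopologicalSpace.denseRange_denseSeq Y
  set r : ℕ → ℝ := fun n => (1/2 : ℝ)^n with hrdef
  have hrpos : ∀ n, 0 < r n := fun n => by positivity
  -- base existence
  have ex0 : ∀ t, ∃ k, (F t ∩ ball (e k) (r 0)).Nonempty := by
    intro t
    obtain ⟨y, hy⟩ := hne t
    obtain ⟨k, hk⟩ := hde.exists_dist_lt y (hrpos 0)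
    exact ⟨k, y, hy, by simpa [dist_comm] using hk⟩
  -- the recursive index functions
  let step : ℕ → (T → ℕ) → T → ℕ := fun n g t =>
    if h : ∃ k, (F t ∩ (ball (e k) (r (n+1)) ∩ ball (e (g t)) (r n))).Nonempty
    then Nat.find h else 0
  let f : ℕ → T → ℕ := fun n =>
    Nat.rec (fun t => Nat.find (ex0 t)) step n
  have f0 : ∀ t, f 0 t = Nat.find (ex0 t) := fun t => rfl
  have fS : ∀ n, f (n+1) = step n (f n) := fun n => rfl
  -- invariant
  have inv : ∀ n t, (F t ∩ ball (e (f n t)) (r n)).Nonempty := by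
    intro n
    induction n with
    | zero => intro t; exact Nat.find_spec (ex0 t)
    | succ n ih =>
      intro t
      obtain ⟨y, hyF, hyb⟩ := ih t
      obtain ⟨k, hk⟩ := hde.exists_dist_lt y (hrpos (n+1))
      have hex : ∃ k, (F t ∩ (ball (e k) (r (n+1)) ∩ ball (e (f n t)) (r n))).Nonempty :=
        ⟨k, y, hyF, by simpa [dist_comm] using hk, hyb⟩
      have : f (n+1) t = Nat.find hex := by
        rw [fS]; simp only [step]; rw [dif_pos hex]
      obtain ⟨y', hy'F, hy'b, _⟩ := Nat.find_spec hex
      exact ⟨y', hy'F, by rwa [this]⟩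
  -- also get the existence used at each step
  have exS : ∀ n t, ∃ k, (F t ∩ (ball (e k) (r (n+1)) ∩ ball (e (f n t)) (r n))).Nonempty := by
    intro n t
    obtain ⟨y, hyF, hyb⟩ := inv n t
    obtain ⟨k, hk⟩ := hde.exists_dist_lt y (hrpos (n+1))
    exact ⟨k, y, hyF, by simpa [dist_comm] using hk, hyb⟩
  have fSval : ∀ n t, f (n+1) t = Nat.find (exS n t) := by
    intro n t; rw [fS]; simp only [step]; rw [dif_pos (exS n t)]
  -- distance between consecutive centers
  have hdist : ∀ n t, dist (e (f n t)) (e (f (n+1) t)) ≤ r (n+1) + r n := by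
    intro n t
    obtain ⟨y, _, hy1, hy2⟩ : (F t ∩ (ball (e (f (n+1) t)) (r (n+1)) ∩ ball (e (f n t)) (r n))).Nonempty := by
      rw [fSval]; exact Nat.find_spec (exS n t)
    calc dist (e (f n t)) (e (f (n+1) t)) ≤ dist (e (f n t)) y + dist y (e (f (n+1) t)) :=
          dist_triangle _ _ _
      _ ≤ r n + r (n+1) := add_le_add (le_of_lt (by rw [dist_comm]; exact mem_ball.mp hy2)) (le_of_lt (mem_ball.mp hy1))
      _ = r (n+1) + r n := add_comm _ _
  -- measurability of each f n
  have hAmeas : ∀ U : Set Y, IsOpen U → MeasurableSet {t | (F t ∩ U).Nonempty} := hweak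
  have fmeas : ∀ n, Measurable (f n) := by
    intro n
    induction n with
    | zero =>
      apply measurable_to_countable'
      intro k
      have : f 0 ⁻¹' {k} = {t | (F t ∩ ball (e k) (r 0)).Nonempty} ∩
          ⋂ (j : ℕ) (_ : j < k), {t | (F t ∩ ball (e j) (r 0)).Nonempty}ᶜ := by
        ext t
        simp only [Set.mem_preimage, Set.mem_singleton_iff, f0, Nat.find_eq_iff,
          Set.mem_inter_iff, Set.mem_iInter, Set.mem_compl_iff, Set.mem_setOf_eq]
      rw [this]
      exact ((hAmeas _ isOpen_ball).inter
        (MeasurableSet.iInter fun j => MeasurableSet.iInter fun _ =>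
          (hAmeas _ isOpen_ball).compl))
    | succ n ih =>
      apply measurable_to_countable'
      intro k
      have hC : ∀ j : ℕ, MeasurableSet {t | (F t ∩ (ball (e j) (r (n+1)) ∩ ball (e (f n t)) (r n))).Nonempty} := by
        intro j
        have : {t | (F t ∩ (ball (e j) (r (n+1)) ∩ ball (e (f n t)) (r n))).Nonempty}
            = ⋃ m : ℕ, (f n ⁻¹' {m}) ∩ {t | (F t ∩ (ball (e j) (r (n+1)) ∩ ball (e m) (r n))).Nonempty} := by
          ext t
          simp only [Set.mem_setOf_eq, Set.mem_iUnion, Set.mem_inter_iff, Set.mem_preimage,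
            Set.mem_singleton_iff]
          constructor
          · intro h; exact ⟨f n t, rfl, h⟩
          · rintro ⟨m, hm, h⟩; rwa [hm]
        rw [this]
        exact MeasurableSet.iUnion fun m =>
          (ih (MeasurableSet.singleton m)).inter (hAmeas _ ((isOpen_ball).inter isOpen_ball))
      have : f (n+1) ⁻¹' {k} =
          {t | (F t ∩ (ball (e k) (r (n+1)) ∩ ball (e (f n t)) (r n))).Nonempty} ∩
          ⋂ (j : ℕ) (_ : j < k),
            {t | (F t ∩ (ball (e j) (r (n+1)) ∩ ball (e (f n t)) (r n))).Nonempty}ᶜ := by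
        ext t
        simp only [Set.mem_preimage, Set.mem_singleton_iff, fSval, Nat.find_eq_iff,
          Set.mem_inter_iff, Set.mem_iInter, Set.mem_compl_iff, Set.mem_setOf_eq]
      rw [this]
      exact (hC k).inter (MeasurableSet.iInter fun j => MeasurableSet.iInter fun _ => (hC j).compl)
  -- the approximating functions
  set g : ℕ → T → Y := fun n t => e (f n t) with hg
  have gmeas : ∀ n, Measurable (g n) := fun n => measurable_from_nat.comp (fmeas n)
  -- Cauchy
  have hcauchy : ∀ t, CauchySeq (fun n => g n t) := by
    intro t
    apply cauchySeq_of_le_geometric (1/2 : ℝ) (3/2)  one_half_lt_one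
    intro n
    have := hdist n t
    have : dist (g n t) (g (n+1) t) ≤ r (n+1) + r n := this
    calc dist (g n t) (g (n+1) t) ≤ r (n+1) + r n := this
      _ = (3/2) * (1/2)^n := by
          simp only [hrdef, pow_succ]; ring
  choose l hl using fun t => cauchySeq_tendsto_of_complete (hcauchy t)
  refine ⟨l, ?_, ?_⟩
  · apply measurable_of_tendsto_metrizable gmeas
    rw [tendsto_pi_nhds]; exact hl
  · intro t
    choose y hyF hyb using fun n => inv n t
    have hyt : Tendsto y atTop (𝓝 (l t)) := by
      rw [tendsto_iff_dist_tendsto_zero]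
      apply squeeze_zero (fun n => dist_nonneg)
        (g := fun n => r n + dist (g n t) (l t))
      · intro n
        calc dist (y n) (l t) ≤ dist (y n) (g n t) + dist (g n t) (l t) := dist_triangle _ _ _
          _ ≤ r n + dist (g n t) (l t) := by
              exact add_le_add (le_of_lt (by simpa [mem_ball] using hyb n)) le_rfl
      · have h1 : Tendsto r atTop (𝓝 0) := by
          simpa [hrdef] using tendsto_pow_atTop_nhds_zero_of_lt_one (by norm_num : (0:ℝ) ≤ 1/2) (by norm_num : (1/2:ℝ) < 1)
        have h2 : Tendsto (fun n => dist (g n t) (l t)) atTop (𝓝 0) := by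
          rw [← tendsto_iff_dist_tendsto_zero]; exact hl t
        simpa using h1.add h2
    exact (hcl t).mem_of_tendsto hyt (Filter.Eventually.of_forall hyF)
end

section
/- Let Y be a countable complete metric space, (T, 𝒯, λ) an atomless probability space, and F : T → Set Y a measurable correspondence with nonempty closed values. Then the set D_F = {λ ∘ f⁻¹ : f a measurable selection of F} is a convex subset of the space M(Y) of Borel probability measures on Y. -/
open MeasureTheory

/-- A measure is atomless: every measurable set of positive measure has a measurable
subset of strictly smaller positive measure. -/
def AtomlessMeasure {T : Type*} [MeasurableSpace T] (μ : Measure T) : Prop :=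
  ∀ A : Set T, MeasurableSet A → 0 < μ A →
    ∃ B : Set T, B ⊆ A ∧ MeasurableSet B ∧ 0 < μ B ∧ μ B < μ A

section Aux

variable {T : Type*} [MeasurableSpace T] {μ : Measure T}

/-- Halving: an atomless finite measure admits, inside any set of positive measure,
a subset of positive measure at most half the total. -/
lemma AtomlessMeasure.halve [IsFiniteMeasure μ] (h : AtomlessMeasure μ) {A : Set T}
    (hA : MeasurableSet A) (hpos : 0 < μ A) :
    ∃ B, B ⊆ A ∧ MeasurableSet B ∧ 0 < μ B ∧ μ B ≤ μ A / 2 := by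
  obtain ⟨B, hBA, hBm, hB0, hBlt⟩ := h A hA hpos
  by_cases hc : μ B ≤ μ A / 2
  · exact ⟨B, hBA, hBm, hB0, hc⟩
  · push_neg at hc
    refine ⟨A \ B, Set.diff_subset, hA.diff hBm, ?_, ?_⟩
    · rw [measure_diff hBA hBm.nullMeasurableSet (measure_ne_top μ B)]
      exact tsub_pos_of_lt hBlt
    · rw [measure_diff hBA hBm.nullMeasurableSet (measure_ne_top μ B)]
      calc μ A - μ B ≤ μ A - μ A / 2 := tsub_le_tsub_left hc.le _
        _ = μ A / 2 := ENNReal.sub_half (measure_ne_top μ A)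

/-- Small sets: an atomless finite measure admits subsets of arbitrarily small
positive measure inside any set of positive measure. -/
lemma AtomlessMeasure.small [IsFiniteMeasure μ] (h : AtomlessMeasure μ) {A : Set T}
    (hA : MeasurableSet A) (hpos : 0 < μ A) {ε : ENNReal} (hε : 0 < ε) :
    ∃ B, B ⊆ A ∧ MeasurableSet B ∧ 0 < μ B ∧ μ B ≤ ε := by
  have key : ∀ n : ℕ, ∃ B, B ⊆ A ∧ MeasurableSet B ∧ 0 < μ B ∧ μ B ≤ μ A * 2⁻¹ ^ n := by
    intro n
    induction n with
    | zero => exact ⟨A, subset_rfl, hA, hpos, by simp⟩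
    | succ n ih =>
      obtain ⟨B, hBA, hBm, hB0, hBle⟩ := ih
      obtain ⟨C, hCB, hCm, hC0, hCle⟩ := h.halve hBm hB0
      refine ⟨C, hCB.trans hBA, hCm, hC0, ?_⟩
      calc μ C ≤ μ B / 2 := hCle
        _ = μ B * 2⁻¹ := by rw [div_eq_mul_inv]
        _ ≤ (μ A * 2⁻¹ ^ n) * 2⁻¹ := mul_le_mul_left hBle _
        _ = μ A * 2⁻¹ ^ (n + 1) := by rw [mul_assoc, pow_succ]
  have hdiv : (0 : ENNReal) < ε / μ A := ENNReal.div_pos hε.ne' (measure_ne_top μ A)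
  obtain ⟨n, hn⟩ := ENNReal.exists_inv_two_pow_lt hdiv.ne'
  obtain ⟨B, h1, h2, h3, h4⟩ := key n
  refine ⟨B, h1, h2, h3, ?_⟩
  calc μ B ≤ μ A * 2⁻¹ ^ n := h4
    _ ≤ μ A * (ε / μ A) := mul_le_mul_right hn.le _
    _ ≤ ε := ENNReal.mul_div_le

/-- Sierpiński: an atomless finite measure takes every intermediate value on
measurable subsets of a given measurable set. -/
lemma AtomlessMeasure.exists_subset_measure_eq [IsFiniteMeasure μ] (h : AtomlessMeasure μ)
    {s : Set T} {c : ENNReal} (hs : MeasurableSet s) (hc : c ≤ μ s) :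
    ∃ t, t ⊆ s ∧ MeasurableSet t ∧ μ t = c := by
  have hcT : c ≠ ⊤ := (hc.trans_lt (measure_lt_top μ s)).ne
  -- near-maximal admissible enlargement step
  have step : ∀ t : Set T, t ⊆ s → MeasurableSet t → μ t ≤ c →
      ∃ u, u ⊆ s \ t ∧ MeasurableSet u ∧ μ t + μ u ≤ c ∧
        ∀ v, v ⊆ s \ t → MeasurableSet v → μ t + μ v ≤ c → μ v ≤ 2 * μ u := by
    intro t hts htm htc
    set S : Set ENNReal :=
      (fun v => μ v) '' {v | v ⊆ s \ t ∧ MeasurableSet v ∧ μ t + μ v ≤ c} with hS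
    have h0S : (0 : ENNReal) ∈ S :=
      ⟨∅, ⟨Set.empty_subset _, MeasurableSet.empty, by simpa using htc⟩, measure_empty⟩
    set δ := sSup S with hδ
    have hmemle : ∀ v, v ⊆ s \ t → MeasurableSet v → μ t + μ v ≤ c → μ v ≤ δ :=
      fun v h1 h2 h3 => le_sSup ⟨v, ⟨h1, h2, h3⟩, rfl⟩
    have hδc : δ ≤ c := by
      refine sSup_le ?_
      rintro x ⟨v, ⟨_, _, hv⟩, rfl⟩
      exact le_trans le_add_self hv
    rcases eq_or_lt_of_le (zero_le : 0 ≤ δ) with h0 | h0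
    · refine ⟨∅, Set.empty_subset _, MeasurableSet.empty, by simpa using htc, ?_⟩
      intro v h1 h2 h3
      have := hmemle v h1 h2 h3
      rw [← h0] at this
      simpa using this
    · have hδT : δ ≠ ⊤ := (hδc.trans_lt (lt_of_le_of_lt hc (measure_lt_top μ s))).ne
      have hhalf : δ / 2 < δ := ENNReal.half_lt_self h0.ne' hδT
      obtain ⟨x, ⟨v, ⟨hv1, hv2, hv3⟩, rfl⟩, hlt⟩ := lt_sSup_iff.mp hhalf
      refine ⟨v, hv1, hv2, hv3, ?_⟩
      intro w h1 h2 h3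
      calc μ w ≤ δ := hmemle w h1 h2 h3
        _ = δ / 2 + δ / 2 := (ENNReal.add_halves δ).symm
        _ ≤ μ v + μ v := add_le_add hlt.le hlt.le
        _ = 2 * μ v := (two_mul _).symm
  choose! u hu_sub hu_m hu_le hu_max using step
  -- iterate the step
  set f : ℕ → Set T := fun n => Nat.rec ∅ (fun _ t => t ∪ u t) n with hf
  have hfs : ∀ n, f (n + 1) = f n ∪ u (f n) := fun n => rfl
  have good : ∀ n, f n ⊆ s ∧ MeasurableSet (f n) ∧ μ (f n) ≤ c := by
    intro n
    induction n with
    | zero => exact ⟨Set.empty_subset _, MeasurableSet.empty, by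
        rw [show f 0 = ∅ from rfl, measure_empty]; exact zero_le⟩
    | succ n ih =>
      obtain ⟨h1, h2, h3⟩ := ih
      have hsub := hu_sub _ h1 h2 h3
      have hm := hu_m _ h1 h2 h3
      have hle := hu_le _ h1 h2 h3
      refine ⟨?_, h2.union hm, ?_⟩
      · rw [hfs]
        exact Set.union_subset h1 (hsub.trans Set.diff_subset)
      · rw [hfs]
        exact (measure_union_le _ _).trans hle
  have hadd : ∀ n, μ (f (n + 1)) = μ (f n) + μ (u (f n)) := by
    intro n
    obtain ⟨h1, h2, h3⟩ := good n
    rw [hfs]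
    exact measure_union (Set.disjoint_of_subset_right (hu_sub _ h1 h2 h3)
      Set.disjoint_sdiff_right) (hu_m _ h1 h2 h3)
  have hmono : Monotone f := monotone_nat_of_le_succ fun n => by
    rw [hfs]; exact Set.subset_union_left
  set t := ⋃ n, f n with ht
  have htm : MeasurableSet t := MeasurableSet.iUnion fun n => (good n).2.1
  have hts : t ⊆ s := Set.iUnion_subset fun n => (good n).1
  have hμt : μ t ≤ c := by
    rw [ht, Directed.measure_iUnion hmono.directed_le]
    exact iSup_le fun n => (good n).2.2
  refine ⟨t, hts, htm, le_antisymm hμt ?_⟩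
  by_contra hlt'
  have hlt : μ t < c := not_le.mp hlt'
  -- find a small admissible set disjoint from t
  have hst : 0 < μ (s \ t) := by
    rw [measure_diff hts htm.nullMeasurableSet (measure_ne_top μ t)]
    exact tsub_pos_of_lt (lt_of_lt_of_le hlt hc)
  obtain ⟨w, hw1, hw2, hw3, hw4⟩ := h.small (hs.diff htm) hst (tsub_pos_of_lt hlt)
  have hwadm : ∀ n, μ w ≤ 2 * μ (u (f n)) := by
    intro n
    obtain ⟨h1, h2, h3⟩ := good n
    refine hu_max _ h1 h2 h3 w (hw1.trans (Set.diff_subset_diff_right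
      (Set.subset_iUnion f n))) hw2 ?_
    calc μ (f n) + μ w ≤ μ t + (c - μ t) :=
          add_le_add (measure_mono (Set.subset_iUnion f n)) hw4
      _ = c := add_tsub_cancel_of_le hμt
  set ε := μ w / 2 with hε
  have hε0 : 0 < ε := ENNReal.half_pos hw3.ne'
  have hεT : ε ≠ ⊤ := by
    refine ne_of_lt (lt_of_le_of_lt ?_ (measure_lt_top μ w))
    exact ENNReal.half_le_self
  have hun : ∀ n, ε ≤ μ (u (f n)) := by
    intro n
    exact ENNReal.div_le_of_le_mul (by rw [mul_comm]; exact hwadm n)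
  have hgrow : ∀ n : ℕ, (n : ENNReal) * ε ≤ μ (f n) := by
    intro n
    induction n with
    | zero => simp
    | succ n ih =>
      rw [hadd n]
      push_cast
      rw [add_mul, one_mul]
      exact add_le_add ih (hun n)
  obtain ⟨n, hn⟩ := ENNReal.exists_nat_gt
    (show c / ε ≠ ⊤ from (ENNReal.div_lt_top hcT hε0.ne').ne)
  have : c < (n : ENNReal) * ε := (ENNReal.div_lt_iff (Or.inl hε0.ne') (Or.inl hεT)).mp hn
  exact absurd ((hgrow n).trans (good n).2.2) (not_le.mpr this)

/-- Key partition computation: if `B p ⊆ g⁻¹ {p}` carries an `a`-fraction of the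
measure of each fiber, then `⋃ p, B p` carries an `a`-fraction of every `g`-preimage. -/
lemma partition_frac {Z : Type*} [MeasurableSpace Z] [Countable Z]
    [MeasurableSingletonClass Z] (g : T → Z) (hg : Measurable g)
    (a : ENNReal) (B : Z → Set T) (hB : ∀ p, B p ⊆ g ⁻¹' {p})
    (hBm : ∀ p, MeasurableSet (B p)) (hBμ : ∀ p, μ (B p) = a * μ (g ⁻¹' {p}))
    (S : Set Z) : μ ((⋃ p, B p) ∩ g ⁻¹' S) = a * μ (g ⁻¹' S) := by
  have hSm : MeasurableSet S := (Set.to_countable S).measurableSet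
  have hfiber_disj : ∀ p q : Z, p ≠ q → Disjoint (g ⁻¹' {p}) (g ⁻¹' {q}) :=
    fun p q hpq => Disjoint.preimage g (Set.disjoint_singleton.mpr hpq)
  have key : ∀ p, μ (B p ∩ g ⁻¹' S) = a * μ (g ⁻¹' {p} ∩ g ⁻¹' S) := by
    intro p
    by_cases hp : p ∈ S
    · have h1 : B p ∩ g ⁻¹' S = B p := Set.inter_eq_left.mpr
        ((hB p).trans (Set.preimage_mono (Set.singleton_subset_iff.mpr hp)))
      have h2 : g ⁻¹' {p} ∩ g ⁻¹' S = g ⁻¹' {p} := Set.inter_eq_left.mpr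
        (Set.preimage_mono (Set.singleton_subset_iff.mpr hp))
      rw [h1, h2, hBμ]
    · have h2 : g ⁻¹' {p} ∩ g ⁻¹' S = ∅ := by
        ext x
        simp only [Set.mem_inter_iff, Set.mem_preimage, Set.mem_singleton_iff,
          Set.mem_empty_iff_false, iff_false, not_and]
        rintro rfl; exact hp
      have h1 : B p ∩ g ⁻¹' S = ∅ := Set.eq_empty_of_subset_empty
        (h2 ▸ Set.inter_subset_inter_left _ (hB p))
      simp [h1, h2]
  have hdisjB : Pairwise (Function.onFun Disjoint fun p => B p ∩ g ⁻¹' S) := by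
    intro p q hpq
    exact Set.disjoint_of_subset (Set.inter_subset_left.trans (hB p))
      (Set.inter_subset_left.trans (hB q)) (hfiber_disj p q hpq)
  have hdisjC : Pairwise (Function.onFun Disjoint fun p => g ⁻¹' {p} ∩ g ⁻¹' S) := by
    intro p q hpq
    exact Set.disjoint_of_subset Set.inter_subset_left Set.inter_subset_left
      (hfiber_disj p q hpq)
  have hcover : (⋃ p, g ⁻¹' {p} ∩ g ⁻¹' S) = g ⁻¹' S := by
    ext x
    simp only [Set.mem_iUnion, Set.mem_inter_iff, Set.mem_preimage, Set.mem_singleton_iff]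
    exact ⟨fun ⟨p, _, h⟩ => h, fun h => ⟨g x, rfl, h⟩⟩
  calc μ ((⋃ p, B p) ∩ g ⁻¹' S) = μ (⋃ p, B p ∩ g ⁻¹' S) := by rw [Set.iUnion_inter]
    _ = ∑' p, μ (B p ∩ g ⁻¹' S) :=
        measure_iUnion hdisjB fun p => (hBm p).inter (hg hSm)
    _ = ∑' p, a * μ (g ⁻¹' {p} ∩ g ⁻¹' S) := by simp_rw [key]
    _ = a * ∑' p, μ (g ⁻¹' {p} ∩ g ⁻¹' S) := ENNReal.tsum_mul_left
    _ = a * μ (⋃ p, g ⁻¹' {p} ∩ g ⁻¹' S) := by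
        rw [measure_iUnion hdisjC fun p => (hg (measurableSet_singleton p)).inter (hg hSm)]
    _ = a * μ (g ⁻¹' S) := by rw [hcover]

end Aux

/-- The set of distributions of measurable selections of `F` is convex. -/
theorem stmt_7 {T Y : Type*} [MeasurableSpace T] [MetricSpace Y] [Countable Y]
    [CompleteSpace Y] [MeasurableSpace Y] [BorelSpace Y]
    (μ : Measure T) [IsProbabilityMeasure μ] (hatomless : AtomlessMeasure μ)
    (F : T → Set Y)
    (hmeas : ∀ y : Y, MeasurableSet {t : T | y ∈ F t})
    (hne : ∀ t, (F t).Nonempty) (hcl : ∀ t, IsClosed (F t)) :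
    ∀ ν₁ ∈ {ν : Measure Y | ∃ f : T → Y, Measurable f ∧ (∀ᵐ t ∂μ, f t ∈ F t) ∧ ν = μ.map f},
    ∀ ν₂ ∈ {ν : Measure Y | ∃ f : T → Y, Measurable f ∧ (∀ᵐ t ∂μ, f t ∈ F t) ∧ ν = μ.map f},
    ∀ r : ENNReal, r ≤ 1 →
      r • ν₁ + (1 - r) • ν₂ ∈
        {ν : Measure Y | ∃ f : T → Y, Measurable f ∧ (∀ᵐ t ∂μ, f t ∈ F t) ∧ ν = μ.map f} := by
  rintro ν₁ ⟨f₁, hf₁m, hf₁sel, rfl⟩ ν₂ ⟨f₂, hf₂m, hf₂sel, rfl⟩ r hr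
  set g : T → Y × Y := fun t => (f₁ t, f₂ t) with hg_def
  have hg : Measurable g := hf₁m.prodMk hf₂m
  have hcell : ∀ p : Y × Y, MeasurableSet (g ⁻¹' {p}) :=
    fun p => hg (measurableSet_singleton p)
  have hAex : ∀ p : Y × Y, ∃ A, A ⊆ g ⁻¹' {p} ∧ MeasurableSet A ∧
      μ A = r * μ (g ⁻¹' {p}) := by
    intro p
    exact hatomless.exists_subset_measure_eq (hcell p)
      (mul_le_of_le_one_left zero_le hr)
  choose A hA_sub hA_m hA_μ using hAex
  have hAm : MeasurableSet (⋃ p, A p) := MeasurableSet.iUnion hA_m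
  classical
  set f : T → Y := (⋃ p, A p).piecewise f₁ f₂ with hf_def
  have hfm : Measurable f := Measurable.piecewise hAm hf₁m hf₂m
  -- the complementary parts of each fiber
  have hB_μ : ∀ p : Y × Y, μ (g ⁻¹' {p} \ A p) = (1 - r) * μ (g ⁻¹' {p}) := by
    intro p
    rw [measure_diff (hA_sub p) (hA_m p).nullMeasurableSet (measure_ne_top μ _), hA_μ,
      ENNReal.sub_mul (fun _ _ => measure_ne_top μ _), one_mul]
  have hcompl : (⋃ p, A p)ᶜ = ⋃ p, g ⁻¹' {p} \ A p := by
    ext x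
    simp only [Set.mem_compl_iff, Set.mem_iUnion, not_exists, Set.mem_diff,
      Set.mem_preimage, Set.mem_singleton_iff]
    constructor
    · intro h
      exact ⟨g x, rfl, h _⟩
    · rintro ⟨p, rfl, hnp⟩ q hxq
      have : g x = q := hA_sub q hxq
      exact hnp (this ▸ hxq)
  refine ⟨f, hfm, ?_, ?_⟩
  · filter_upwards [hf₁sel, hf₂sel] with t h1 h2
    by_cases ht : t ∈ ⋃ p, A p <;> simp [hf_def, Set.piecewise, ht, h1, h2]
  · ext E hE
    rw [Measure.map_apply hfm hE]
    have hpre : f ⁻¹' E = ((⋃ p, A p) ∩ f₁ ⁻¹' E) ∪ ((⋃ p, A p)ᶜ ∩ f₂ ⁻¹' E) := by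
      rw [hf_def, Set.piecewise_preimage, Set.ite]
      rw [Set.inter_comm, Set.diff_eq, Set.inter_comm (f₂ ⁻¹' E)]
    have hdisj : Disjoint ((⋃ p, A p) ∩ f₁ ⁻¹' E) (((⋃ p, A p)ᶜ) ∩ f₂ ⁻¹' E) :=
      Set.disjoint_of_subset Set.inter_subset_left Set.inter_subset_left
        disjoint_compl_right
    have h1 : f₁ ⁻¹' E = g ⁻¹' (Prod.fst ⁻¹' E) := rfl
    have h2 : f₂ ⁻¹' E = g ⁻¹' (Prod.snd ⁻¹' E) := rfl
    have hmeas2 : MeasurableSet ((⋃ p, A p)ᶜ ∩ f₂ ⁻¹' E) :=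
      hAm.compl.inter (hf₂m hE)
    rw [hpre, measure_union hdisj hmeas2]
    have hc1 : μ ((⋃ p, A p) ∩ f₁ ⁻¹' E) = r * μ (f₁ ⁻¹' E) := by
      rw [h1]
      exact partition_frac g hg r A hA_sub hA_m hA_μ _
    have hc2 : μ ((⋃ p, A p)ᶜ ∩ f₂ ⁻¹' E) = (1 - r) * μ (f₂ ⁻¹' E) := by
      rw [hcompl, h2]
      exact partition_frac g hg (1 - r) (fun p => g ⁻¹' {p} \ A p)
        (fun p => Set.diff_subset) (fun p => (hcell p).diff (hA_m p)) hB_μ _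
    rw [hc1, hc2]
    simp [Measure.map_apply hf₁m hE, Measure.map_apply hf₂m hE]
end
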